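/- Eigenfunctions of the isotonic oscillator. Fix a real α ≥ 1/2 and a natural number k. For every x > 0, the function ψ_k^α satisfies the eigenvalue equation of the isotonic oscillator Hamiltonian L_α = (1/2)(−d²/dx² + x² + (α² − 1/4)/x²): namely, (1/2) · ( −(ψ_k^α)''(x) + x² ψ_k^α(x) + ((α² − 1/4)/x²) ψ_k^α(x) ) = (2k + α + 1) · ψ_k^α(x), where (ψ_k^α)'' denotes the second derivative. -/

import Mathlib

/-!
On `(0, ∞)`, `ψ_k^α` is a combination of the functions `g_γ(x) = x^γ e^{-x²/2}` with
`γ = α + 1/2 + 2i`, and `g_γ' = γ g_{γ-1} - g_{γ+1}`. The Hamiltonian sends `g_γ` to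
`(γ + 1/2) g_γ + ((α² - (γ - 1/2)²)/2) g_{γ-2}`, a multiple of `g_γ` plus a lowered term. The ratio
of consecutive Laguerre coefficients (the Laguerre equation in coefficient form) turns the lowered
terms into `2(i - k)` times the unlowered ones, which leaves the eigenvalue `2k + α + 1`.
-/

open MeasureTheory

/-- Rising factorial (Pochhammer symbol) `(a)_j = ∏_{i=0}^{j-1} (a + i)`. -/
noncomputable def risingFactorial (a : ℝ) (j : ℕ) : ℝ :=
  ∏ i ∈ Finset.range j, (a + i)

/-- Generalized Laguerre polynomial `L_k^{(α)}(x)`. -/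
noncomputable def laguerreL (k : ℕ) (α x : ℝ) : ℝ :=
  ∑ i ∈ Finset.range (k + 1),
    ((-1 : ℝ) ^ i / (i.factorial * (k - i).factorial)) *
      risingFactorial (α + i + 1) (k - i) * x ^ i

/-- Eigenfunctions of the isotonic oscillator:
`ψ_k^α(x) = √(2 k! / Γ(k+α+1)) x^{α+1/2} e^{−x²/2} L_k^{(α)}(x²)`. -/
noncomputable def psiIso (α : ℝ) (k : ℕ) (x : ℝ) : ℝ :=
  Real.sqrt (2 * k.factorial / Real.Gamma (k + α + 1)) *
    x ^ (α + 1 / 2) * Real.exp (-x ^ 2 / 2) * laguerreL k α (x ^ 2)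

open Filter Topology Finset

noncomputable def gaussRpow (γ x : ℝ) : ℝ := x ^ γ * Real.exp (-x ^ 2 / 2)

lemma gaussRpow_add_two (γ : ℝ) {x : ℝ} (hx : 0 < x) :
    gaussRpow (γ + 2) x = x ^ 2 * gaussRpow γ x := by
  rw [gaussRpow, gaussRpow, Real.rpow_add hx, Real.rpow_two]
  ring

lemma hasDerivAt_gaussRpow (γ : ℝ) {x : ℝ} (hx : 0 < x) :
    HasDerivAt (gaussRpow γ) (γ * gaussRpow (γ - 1) x - gaussRpow (γ + 1) x) x := by
  have hpow := Real.hasDerivAt_rpow_const (p := γ) (Or.inl hx.ne')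
  have hexp := ((hasDerivAt_pow 2 x).fun_neg.div_const 2).exp
  refine (hpow.mul hexp).congr_deriv ?_
  rw [gaussRpow, gaussRpow, Real.rpow_add hx, Real.rpow_one]
  push_cast
  ring

lemma hasDerivAt_gaussRpow_deriv (γ : ℝ) {x : ℝ} (hx : 0 < x) :
    HasDerivAt (fun y => γ * gaussRpow (γ - 1) y - gaussRpow (γ + 1) y)
      (γ * (γ - 1) * gaussRpow (γ - 2) x - (2 * γ + 1) * gaussRpow γ x +
        gaussRpow (γ + 2) x) x := by
  refine (((hasDerivAt_gaussRpow (γ - 1) hx).const_mul γ).sub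
    (hasDerivAt_gaussRpow (γ + 1) hx)).congr_deriv ?_
  rw [show γ - 1 - 1 = γ - 2 by ring, sub_add_cancel, add_sub_cancel_right,
    show γ + 1 + 1 = γ + 2 by ring]
  ring

lemma deriv_deriv_sum_gaussRpow {ι : Type*} (s : Finset ι) (a γ : ι → ℝ) {x : ℝ} (hx : 0 < x) :
    deriv (deriv fun y => ∑ i ∈ s, a i * gaussRpow (γ i) y) x =
      ∑ i ∈ s, a i * (γ i * (γ i - 1) * gaussRpow (γ i - 2) x -
        (2 * γ i + 1) * gaussRpow (γ i) x + gaussRpow (γ i + 2) x) := by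
  have hderiv : deriv (fun y => ∑ i ∈ s, a i * gaussRpow (γ i) y) =ᶠ[𝓝 x]
      fun y => ∑ i ∈ s, a i * (γ i * gaussRpow (γ i - 1) y - gaussRpow (γ i + 1) y) := by
    filter_upwards [Ioi_mem_nhds hx] with y hy
    exact (HasDerivAt.fun_sum fun i _ => (hasDerivAt_gaussRpow (γ i) hy).const_mul (a i)).deriv
  rw [hderiv.deriv_eq]
  exact (HasDerivAt.fun_sum fun i _ => (hasDerivAt_gaussRpow_deriv (γ i) hx).const_mul (a i)).deriv

lemma isotonic_gaussRpow (α γ : ℝ) {x : ℝ} (hx : 0 < x) :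
    (1 / 2) * (-(γ * (γ - 1) * gaussRpow (γ - 2) x - (2 * γ + 1) * gaussRpow γ x +
        gaussRpow (γ + 2) x) + x ^ 2 * gaussRpow γ x + ((α ^ 2 - 1 / 4) / x ^ 2) * gaussRpow γ x)
      = (γ + 1 / 2) * gaussRpow γ x + (α ^ 2 - (γ - 1 / 2) ^ 2) / 2 * gaussRpow (γ - 2) x := by
  have hγ := gaussRpow_add_two γ hx
  have hγ₂ := gaussRpow_add_two (γ - 2) hx
  rw [sub_add_cancel] at hγ₂
  rw [hγ, hγ₂]
  field_simp
  ring

lemma risingFactorial_succ (a : ℝ) (n : ℕ) :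
    risingFactorial a (n + 1) = a * risingFactorial (a + 1) n := by
  simp only [risingFactorial, prod_range_succ', Nat.cast_zero, add_zero, Nat.cast_succ, add_assoc,
    add_comm (1 : ℝ)]
  ring

noncomputable def laguerreCoeff (α : ℝ) (k i : ℕ) : ℝ :=
  (-1) ^ i / (i.factorial * (k - i).factorial) * risingFactorial (α + i + 1) (k - i)

lemma laguerreCoeff_succ_mul {α : ℝ} {k i : ℕ} (h : i < k) :
    laguerreCoeff α k (i + 1) * ((i + 1) * (α + i + 1)) = (i - k) * laguerreCoeff α k i := by
  obtain ⟨m, rfl⟩ := Nat.exists_eq_add_of_lt h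
  rw [laguerreCoeff, laguerreCoeff, show i + m + 1 - (i + 1) = m by omega,
    show i + m + 1 - i = m + 1 by omega, risingFactorial_succ, Nat.factorial_succ,
    Nat.factorial_succ]
  push_cast
  rw [← add_assoc α]
  field_simp
  ring

lemma sum_laguerreCoeff_lowering (α : ℝ) (k : ℕ) (G H : ℕ → ℝ) (hGH : ∀ i, H (i + 1) = G i) :
    ∑ i ∈ range (k + 1), laguerreCoeff α k i * ((α + 1 + 2 * i) * G i - 2 * i * (α + i) * H i)
      = (2 * k + α + 1) * ∑ i ∈ range (k + 1), laguerreCoeff α k i * G i := by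
  have hshift : ∑ i ∈ range (k + 1), laguerreCoeff α k i * (2 * i * (α + i)) * H i
      = ∑ i ∈ range (k + 1), 2 * (i - k) * laguerreCoeff α k i * G i := by
    rw [sum_range_succ', sum_range_succ]
    refine congrArg₂ _ (sum_congr rfl fun i hi => ?_) (by simp)
    have hrec := laguerreCoeff_succ_mul (α := α) (mem_range.1 hi)
    rw [hGH]
    push_cast
    linear_combination 2 * G i * hrec
  calc _ = ∑ i ∈ range (k + 1), laguerreCoeff α k i * (α + 1 + 2 * i) * G i
          - ∑ i ∈ range (k + 1), laguerreCoeff α k i * (2 * i * (α + i)) * H i := by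
        rw [← sum_sub_distrib]
        exact sum_congr rfl fun i _ => by ring
    _ = _ := by
        rw [hshift, ← sum_sub_distrib, mul_sum]
        exact sum_congr rfl fun i _ => by ring

lemma psiIso_eq_sum (α : ℝ) (k : ℕ) {x : ℝ} (hx : 0 < x) :
    psiIso α k x = ∑ i ∈ range (k + 1), Real.sqrt (2 * k.factorial / Real.Gamma (k + α + 1)) *
      laguerreCoeff α k i * gaussRpow (α + 1 / 2 + 2 * i) x := by
  simp only [psiIso, laguerreL, mul_sum]
  refine sum_congr rfl fun i _ => ?_
  rw [gaussRpow, Real.rpow_add hx (α + 1 / 2), Real.rpow_mul hx.le, Real.rpow_two,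
    Real.rpow_natCast, laguerreCoeff]
  ring

theorem isotonic_eigenfunction_general (α : ℝ) (k : ℕ) :
    ∀ x : ℝ, 0 < x →
      (1 / 2) * (-(deriv (deriv (psiIso α k)) x) + x ^ 2 * psiIso α k x +
          ((α ^ 2 - 1 / 4) / x ^ 2) * psiIso α k x)
        = (2 * k + α + 1) * psiIso α k x := by
  intro x hx
  set N := Real.sqrt (2 * k.factorial / Real.Gamma (k + α + 1))
  set γ : ℕ → ℝ := fun i => α + 1 / 2 + 2 * i
  have hψ : psiIso α k =ᶠ[𝓝 x]
      fun y => ∑ i ∈ range (k + 1), N * laguerreCoeff α k i * gaussRpow (γ i) y := by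
    filter_upwards [Ioi_mem_nhds hx] with y hy using psiIso_eq_sum α k hy
  have hterm (i : ℕ) : (1 / 2) * (-(γ i * (γ i - 1) * gaussRpow (γ i - 2) x -
        (2 * γ i + 1) * gaussRpow (γ i) x + gaussRpow (γ i + 2) x) + x ^ 2 * gaussRpow (γ i) x +
        ((α ^ 2 - 1 / 4) / x ^ 2) * gaussRpow (γ i) x)
      = (α + 1 + 2 * i) * gaussRpow (γ i) x - 2 * i * (α + i) * gaussRpow (γ i - 2) x := by
    rw [isotonic_gaussRpow α (γ i) hx]
    ring
  rw [hψ.deriv.deriv_eq, deriv_deriv_sum_gaussRpow _ _ _ hx, hψ.eq_of_nhds]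
  calc _ = N * ∑ i ∈ range (k + 1), laguerreCoeff α k i *
          ((α + 1 + 2 * i) * gaussRpow (γ i) x - 2 * i * (α + i) * gaussRpow (γ i - 2) x) := by
        simp only [mul_sum, ← sum_neg_distrib, ← sum_add_distrib]
        exact sum_congr rfl fun i _ => by linear_combination N * laguerreCoeff α k i * hterm i
    _ = _ := by
        rw [sum_laguerreCoeff_lowering α k _ _ fun i => by simp only [γ]; congr 1; push_cast; ring]
        simp only [mul_sum]
        exact sum_congr rfl fun i _ => by ring

/-- The eigenfunctions `ψ_k^α` satisfy the eigenvalue equation of the isotonic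
oscillator Hamiltonian `L_α = (1/2)(−d²/dx² + x² + (α²−1/4)/x²)` with eigenvalue
`2k + α + 1`, for every `x > 0`. -/
theorem isotonic_eigenfunction (α : ℝ) (hα : 1 / 2 ≤ α) (k : ℕ) :
    ∀ x : ℝ, 0 < x →
      (1 / 2) * (-(deriv (deriv (psiIso α k)) x) + x ^ 2 * psiIso α k x +
          ((α ^ 2 - 1 / 4) / x ^ 2) * psiIso α k x)
        = (2 * k + α + 1) * psiIso α k x :=
  isotonic_eigenfunction_general α k
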